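/- arXiv:1507.08641 — 6 statements merged into one kernel-verified Lean document; each statement's English description precedes it below -/
import Mathlib

section
/- Let C ⊆ F_{q^m}^n be a linear rank-metric code of dimension k over F_{q^m} (1 ≤ k ≤ n) with generator matrix G ∈ F_{q^m}^{k×n}. Then C is an MRD code if and only if for every k×n matrix V with entries in F_q whose rank over F_q equals k, the k×k matrix V·G^T (computed over F_{q^m}, viewing the entries of V inside F_{q^m}) has rank k over F_{q^m}, i.e. is invertible. -/
open Matrix

/-- The rank over the subfield `Fq` of a vector with entries in `K`:
the `Fq`-dimension of the `Fq`-span of its coordinates. -/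
noncomputable def rankQ (Fq : Type) {K : Type} [Field Fq] [Field K] [Algebra Fq K] {n : ℕ}
    (v : Fin n → K) : ℕ :=
  Module.finrank Fq (Submodule.span Fq (Set.range v))

/-- The minimum rank distance of a linear rank-metric code `C ⊆ K^n`. -/
noncomputable def minRankDist (Fq : Type) {K : Type} [Field Fq] [Field K] [Algebra Fq K] {n : ℕ}
    (C : Submodule K (Fin n → K)) : ℕ :=
  sInf (rankQ Fq '' {c : Fin n → K | c ∈ C ∧ c ≠ 0})

/-- A linear code `C ⊆ K^n` of dimension `k` over `K` is MRD if its minimum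
rank distance equals `n - k + 1`. -/
def IsMRD (Fq : Type) {K : Type} [Field Fq] [Field K] [Algebra Fq K] {n : ℕ}
    (C : Submodule K (Fin n → K)) (k : ℕ) : Prop :=
  Module.finrank K C = k ∧ minRankDist Fq C = n - k + 1

/-- `G` is a generator matrix of `C`: its rows form a `K`-basis of `C`. -/
def IsGenMat {K : Type} [Field K] {k n : ℕ} (C : Submodule K (Fin n → K))
    (G : Matrix (Fin k) (Fin n) K) : Prop :=
  LinearIndependent K (fun i => G i) ∧ Submodule.span K (Set.range fun i => G i) = C

/-
For a codeword `c = x G`, the `j`-th entry of `(V Gᵀ) x` is `∑ᵢ V j i • c i`, so `V Gᵀ` is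
singular exactly when some nonzero codeword `c` has every row of `V` in the kernel of the
`F_q`-linear map `v ↦ ∑ᵢ v i • c i`. By rank–nullity that kernel has dimension `n - rank_q c`,
so it contains the rows of a rank-`k` matrix iff `rank_q c ≤ n - k`. The condition on `G` thus
says that every nonzero codeword has rank at least `n - k + 1`, which, by the Singleton bound
(some nonzero codeword vanishes on `k - 1` coordinates), means that `C` is MRD.
-/

section Matrix

variable {Fq K : Type} [Field Fq] [Field K] [Algebra Fq K] {ι κ α : Type}
  [Fintype κ] [Fintype α]

theorem map_mul_transpose_mulVec (V : Matrix ι α Fq) (G : Matrix κ α K) (x : κ → K) :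
    (V.map (algebraMap Fq K) * Gᵀ) *ᵥ x =
      fun j => Fintype.linearCombination Fq (x ᵥ* G) (V j) := by
  ext j
  rw [← Matrix.mulVec_mulVec, Matrix.mulVec_transpose]
  simp [Matrix.mulVec, dotProduct, Fintype.linearCombination_apply, Algebra.smul_def]

theorem det_map_mul_transpose_eq_zero_iff [DecidableEq κ] {G : Matrix κ α K}
    (hG : LinearIndependent K fun i => G i) (V : Matrix κ α Fq) :
    (V.map (algebraMap Fq K) * Gᵀ).det = 0 ↔
      ∃ c ∈ Submodule.span K (Set.range fun i => G i), c ≠ 0 ∧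
        ∀ j, V j ∈ LinearMap.ker (Fintype.linearCombination Fq c) := by
  have hinj : Function.Injective fun x : κ → K => x ᵥ* G := Matrix.vecMul_injective_iff.2 hG
  rw [← Matrix.exists_mulVec_eq_zero_iff]
  constructor
  · rintro ⟨x, hx0, hx⟩
    refine ⟨x ᵥ* G, ?_, ?_, fun j => congrFun ((map_mul_transpose_mulVec V G x).symm.trans hx) j⟩
    · exact (Submodule.mem_span_range_iff_exists_fun K).2 ⟨x, (Matrix.vecMul_eq_sum x G).symm⟩
    · exact fun h => hx0 (hinj (h.trans (Matrix.zero_vecMul G).symm))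
  · rintro ⟨c, hc, hc0, hV⟩
    obtain ⟨x, rfl⟩ := (Submodule.mem_span_range_iff_exists_fun K).1 hc
    rw [← Matrix.vecMul_eq_sum] at hc0 hV
    refine ⟨x, fun hx => hc0 (by rw [hx, Matrix.zero_vecMul]), ?_⟩
    rw [map_mul_transpose_mulVec]
    exact funext hV

variable (Fq) in
theorem exists_rank_eq_forall_mem_iff {k : ℕ} (N : Submodule Fq (α → Fq)) :
    (∃ V : Matrix (Fin k) α Fq, V.rank = k ∧ ∀ j, V j ∈ N) ↔ k ≤ Module.finrank Fq N := by
  constructor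
  · rintro ⟨V, hV, hVN⟩
    rw [← hV, Matrix.rank_eq_finrank_span_row]
    exact Submodule.finrank_mono (Submodule.span_le.2 (Set.range_subset_iff.2 hVN))
  · intro hk
    obtain ⟨f, hf⟩ := exists_linearIndependent_of_le_finrank hk
    exact ⟨fun i => f i, (hf.map' N.subtype N.ker_subtype).rank_matrix.trans (Fintype.card_fin k),
      fun i => (f i).2⟩

end Matrix

section RankMetric

variable (Fq : Type) {K : Type} [Field Fq] [Field K] [Algebra Fq K] {n : ℕ}

theorem rankQ_add_finrank_ker (c : Fin n → K) :
    rankQ Fq c + Module.finrank Fq (LinearMap.ker (Fintype.linearCombination Fq c)) = n := by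
  have := LinearMap.finrank_range_add_finrank_ker (Fintype.linearCombination Fq c)
  rwa [Fintype.range_linearCombination, Module.finrank_fin_fun] at this

theorem rankQ_le_of_forall_eq_zero {c : Fin n → K} (S : Finset (Fin n))
    (hS : ∀ i ∈ S, c i = 0) : rankQ Fq c ≤ n - S.card := by
  classical
  have hsub : Set.range c ⊆ insert 0 ↑(Sᶜ.image c) := by
    rintro _ ⟨i, rfl⟩
    by_cases hi : i ∈ S
    · exact Or.inl (hS i hi)
    · exact Or.inr (Finset.mem_image_of_mem c (Finset.mem_compl.2 hi))
  calc rankQ Fq c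
      ≤ Module.finrank Fq (Submodule.span Fq (↑(Sᶜ.image c) : Set K)) :=
        Submodule.finrank_mono ((Submodule.span_mono hsub).trans_eq Submodule.span_insert_zero)
    _ ≤ (Sᶜ.image c).card := finrank_span_finset_le_card _
    _ ≤ Sᶜ.card := Finset.card_image_le
    _ = n - S.card := by rw [Finset.card_compl, Fintype.card_fin]

theorem exists_mem_ne_zero_forall_eq_zero (C : Submodule K (Fin n → K)) (S : Finset (Fin n))
    (hS : S.card < Module.finrank K C) : ∃ c ∈ C, c ≠ 0 ∧ ∀ i ∈ S, c i = 0 := by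
  let restrict : C →ₗ[K] (S → K) :=
    LinearMap.pi fun i => (LinearMap.proj (i : Fin n)).comp C.subtype
  have hker : LinearMap.ker restrict ≠ ⊥ := by
    intro hbot
    have hrank := LinearMap.finrank_range_add_finrank_ker restrict
    have hrange := Submodule.finrank_le (LinearMap.range restrict)
    rw [hbot, finrank_bot] at hrank
    rw [Module.finrank_fintype_fun_eq_card, Fintype.card_coe] at hrange
    omega
  obtain ⟨c, hc, hc0⟩ := (Submodule.ne_bot_iff _).mp hker
  refine ⟨c, c.2, by simpa using hc0, fun i hi => ?_⟩
  simpa [restrict] using congrFun (LinearMap.mem_ker.mp hc) ⟨i, hi⟩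

theorem exists_mem_ne_zero_rankQ_le {k : ℕ} (C : Submodule K (Fin n → K))
    (hC : Module.finrank K C = k) (hk : 1 ≤ k) (hkn : k ≤ n) :
    ∃ c ∈ C, c ≠ 0 ∧ rankQ Fq c ≤ n - k + 1 := by
  obtain ⟨S, -, hS⟩ := Finset.exists_subset_card_eq (s := (Finset.univ : Finset (Fin n)))
    (n := k - 1) (by rw [Finset.card_univ, Fintype.card_fin]; omega)
  obtain ⟨c, hcC, hc0, hcS⟩ := exists_mem_ne_zero_forall_eq_zero C S (by omega)
  exact ⟨c, hcC, hc0, (rankQ_le_of_forall_eq_zero Fq S hcS).trans (by omega)⟩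

theorem sub_add_one_le_rankQ_iff {k : ℕ} (hkn : k ≤ n) (c : Fin n → K) :
    n - k + 1 ≤ rankQ Fq c ↔ ¬∃ V : Matrix (Fin k) (Fin n) Fq, V.rank = k ∧
      ∀ j, V j ∈ LinearMap.ker (Fintype.linearCombination Fq c) := by
  rw [exists_rank_eq_forall_mem_iff]
  have := rankQ_add_finrank_ker Fq c
  omega

theorem isMRD_iff_forall_le_rankQ {k : ℕ} (C : Submodule K (Fin n → K))
    (hC : Module.finrank K C = k) (hk : 1 ≤ k) (hkn : k ≤ n) :
    IsMRD Fq C k ↔ ∀ c ∈ C, c ≠ 0 → n - k + 1 ≤ rankQ Fq c := by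
  obtain ⟨c₀, hc₀C, hc₀0, hc₀⟩ := exists_mem_ne_zero_rankQ_le Fq C hC hk hkn
  have hmem : rankQ Fq c₀ ∈ rankQ Fq '' {c | c ∈ C ∧ c ≠ 0} := ⟨c₀, ⟨hc₀C, hc₀0⟩, rfl⟩
  constructor
  · rintro ⟨-, h⟩ c hc hc0
    exact h ▸ Nat.sInf_le ⟨c, ⟨hc, hc0⟩, rfl⟩
  · refine fun h => ⟨hC, le_antisymm ((Nat.sInf_le hmem).trans hc₀) ?_⟩
    exact le_csInf ⟨_, hmem⟩ (by rintro _ ⟨c, ⟨hc, hc0⟩, rfl⟩; exact h c hc hc0)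

end RankMetric

theorem stmt0_general {n k : ℕ} (Fq K : Type) [Field Fq] [Field K] [Algebra Fq K]
    (hk : 1 ≤ k) (hkn : k ≤ n)
    (C : Submodule K (Fin n → K)) (G : Matrix (Fin k) (Fin n) K) (hG : IsGenMat C G) :
    IsMRD Fq C k ↔
      ∀ V : Matrix (Fin k) (Fin n) Fq, V.rank = k →
        IsUnit ((V.map (algebraMap Fq K)) * G.transpose).det := by
  obtain ⟨hind, rfl⟩ := hG
  have hdim : Module.finrank K (Submodule.span K (Set.range fun i => G i)) = k := by
    rw [finrank_span_eq_card hind, Fintype.card_fin]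
  simp only [isMRD_iff_forall_le_rankQ Fq _ hdim hk hkn, sub_add_one_le_rankQ_iff Fq hkn,
    isUnit_iff_ne_zero, ne_eq, det_map_mul_transpose_eq_zero_iff hind]
  exact ⟨fun h V hV ⟨c, hc, hc0, hVc⟩ => h c hc hc0 ⟨V, hV, hVc⟩,
    fun h c hc hc0 ⟨V, hV, hVc⟩ => h V hV ⟨c, hc, hc0, hVc⟩⟩

/-- `C` is MRD iff `V * Gᵀ` is invertible for every full-rank
`k × n` matrix `V` over `F_q`. -/
theorem stmt0 {q m n k : ℕ} (Fq K : Type) [Field Fq] [Fintype Fq] [Field K] [Fintype K]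
    [Algebra Fq K] (hq : Fintype.card Fq = q) (hK : Fintype.card K = q ^ m)
    (hk : 1 ≤ k) (hkn : k ≤ n)
    (C : Submodule K (Fin n → K)) (G : Matrix (Fin k) (Fin n) K) (hG : IsGenMat C G) :
    IsMRD Fq C k ↔
      ∀ V : Matrix (Fin k) (Fin n) Fq, V.rank = k →
        IsUnit ((V.map (algebraMap Fq K)) * G.transpose).det :=
  stmt0_general Fq K hk hkn C G hG
end

section
/- Let C ⊆ F_{q^m}^n be an MRD code of dimension k over F_{q^m} (1 ≤ k ≤ n), and let G ∈ F_{q^m}^{k×n} be any generator matrix of C. Then every maximal minor of G is non-zero; that is, for every choice of k column indices, the determinant of the corresponding k×k submatrix of G is non-zero. -/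
open Matrix

/-- every maximal minor of a generator matrix of an MRD code is non-zero. -/
theorem stmt1 {q m n k : ℕ} (Fq K : Type) [Field Fq] [Fintype Fq] [Field K] [Fintype K]
    [Algebra Fq K] (hq : Fintype.card Fq = q) (hK : Fintype.card K = q ^ m)
    (hk : 1 ≤ k) (hkn : k ≤ n)
    (C : Submodule K (Fin n → K)) (hMRD : IsMRD Fq C k)
    (G : Matrix (Fin k) (Fin n) K) (hG : IsGenMat C G) :
    ∀ φ : Fin k → Fin n, Function.Injective φ → (G.submatrix id φ).det ≠ 0 := by
  classical
  have hfd : FiniteDimensional Fq K := Module.Finite.of_finite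
  intro φ hφ hdet
  obtain ⟨x, hx0, hxM⟩ := (Matrix.exists_vecMul_eq_zero_iff).mpr hdet
  set c : Fin n → K := Matrix.vecMul x G with hc
  have hcsum : c = ∑ i, x i • G i := by
    ext j
    simp [hc, Matrix.vecMul, dotProduct, Finset.sum_apply]
  have hcC : c ∈ C := by
    rw [← hG.2, hcsum]
    exact Submodule.sum_mem _ fun i _ =>
      Submodule.smul_mem _ _ (Submodule.subset_span ⟨i, rfl⟩)
  have hcne : c ≠ 0 := by
    intro h
    apply hx0
    have hz : ∑ i, x i • G i = 0 := by rw [← hcsum, h]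
    have := Fintype.linearIndependent_iff.mp hG.1 x hz
    ext i; exact this i
  have hczero : ∀ j, c (φ j) = 0 := by
    intro j
    have := congrFun hxM j
    simpa [hc, Matrix.vecMul, dotProduct] using this
  -- rank bound
  have hrank_le : rankQ Fq c ≤ n - k := by
    set t : Finset K := Finset.image c ((Finset.univ.image φ)ᶜ) with ht
    have hsub : Submodule.span Fq (Set.range c) ≤ Submodule.span Fq (t : Set K) := by
      rw [Submodule.span_le]
      rintro _ ⟨j, rfl⟩
      by_cases hj : j ∈ Finset.univ.image φ
      · obtain ⟨i, _, rfl⟩ := Finset.mem_image.mp hj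
        rw [hczero i]; exact Submodule.zero_mem _
      · exact Submodule.subset_span
          (Finset.mem_coe.mpr (Finset.mem_image_of_mem c (Finset.mem_compl.mpr hj)))
    have h1 : rankQ Fq c ≤ Module.finrank Fq (Submodule.span Fq (t : Set K)) :=
      Submodule.finrank_mono hsub
    have h2 : Module.finrank Fq (Submodule.span Fq (t : Set K)) ≤ t.card :=
      finrank_span_finset_le_card t
    have h3 : t.card ≤ ((Finset.univ.image φ)ᶜ : Finset (Fin n)).card :=
      Finset.card_image_le
    have h4 : ((Finset.univ.image φ)ᶜ : Finset (Fin n)).card = n - k := by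
      rw [Finset.card_compl, Finset.card_image_of_injective _ hφ]
      simp
    omega
  have hmem : rankQ Fq c ∈ rankQ Fq '' {c : Fin n → K | c ∈ C ∧ c ≠ 0} :=
    ⟨c, ⟨hcC, hcne⟩, rfl⟩
  have hge : minRankDist Fq C ≤ rankQ Fq c := Nat.sInf_le hmem
  rw [hMRD.2] at hge
  omega
end

section
/- Let s be a positive integer with gcd(s, m) = 1, and let v = (v_1, …, v_n) ∈ F_{q^m}^n be a vector with rank_q(v) = r. Then the r vectors v, v^{[s]}, v^{[2s]}, …, v^{[s(r−1)]} are linearly independent over F_{q^m}, where v^{[j]} denotes the coordinatewise q^j-th power of v. -/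
open Matrix

/-! A `K`-linear relation `∑ cᵢ v^[s i] = 0` says that the `F_q`-linear map `L = ∑ cᵢ τⁱ`,
`τ = Frob^s`, vanishes on the `F_q`-span of the `vⱼ`, which has dimension `r`. As
`gcd(s, m) = 1`, the fixed field of `τ` is `F_q`, and for such `τ` the kernel of
`∑_{i ≤ d} cᵢ τⁱ` with `c_d ≠ 0` has `F_q`-dimension at most `d`: if `u ≠ 0` is in the kernel,
`x ↦ L (u x)` is again of this form, of the same degree, and kills `1`. So its coefficient
polynomial is divisible by `X - 1`, i.e. `L (u ·) = M ∘ (τ - 1)` with `deg M = d - 1`, and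
`ker (τ - 1) = F_q` is a line. -/

open Polynomial Module LinearMap

theorem LinearMap.finrank_ker_comp_le {F V W U : Type*} [Field F] [AddCommGroup V] [Module F V]
    [AddCommGroup W] [Module F W] [AddCommGroup U] [Module F U]
    [FiniteDimensional F V] [FiniteDimensional F W] (f : V →ₗ[F] W) (g : W →ₗ[F] U) :
    finrank F (ker (g ∘ₗ f)) ≤ finrank F (ker g) + finrank F (ker f) := by
  set P := ker (g ∘ₗ f)
  have hrange : finrank F (range (f.domRestrict P)) ≤ finrank F (ker g) := by
    rw [range_domRestrict]
    exact Submodule.finrank_mono (Submodule.map_le_iff_le_comap.mpr (ker_comp f g).le)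
  have hker : finrank F (ker (f.domRestrict P)) ≤ finrank F (ker f) := by
    rw [ker_domRestrict, ← Submodule.finrank_map_subtype_eq, Submodule.map_comap_subtype]
    exact Submodule.finrank_mono inf_le_right
  have := (f.domRestrict P).finrank_range_add_finrank_ker
  omega

namespace AlgHom

variable {F K : Type*} [Field F] [Field K] [Algebra F K] (τ : K →ₐ[F] K)

/-- `∑ aᵢ Xⁱ ↦ ∑ aᵢ τⁱ`, the `τ`-linearized polynomial map. -/
noncomputable def linearized : K[X] →ₗ[K] K →ₗ[F] K :=
  lsum fun i ↦ toSpanSingleton K _ (τ ^ i).toLinearMap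

theorem linearized_monomial (n : ℕ) (a : K) :
    τ.linearized (monomial n a) = a • (τ ^ n).toLinearMap := by
  simp [linearized]

theorem linearized_apply (p : K[X]) (x : K) :
    τ.linearized p x = p.sum fun i a ↦ a * (τ ^ i) x := by
  simp [linearized, Polynomial.sum, LinearMap.sum_apply]

theorem linearized_apply_one (p : K[X]) : τ.linearized p 1 = p.eval 1 := by
  simp [linearized_apply, eval_eq_sum]

theorem linearized_mul_X (p : K[X]) :
    τ.linearized (p * X) = τ.linearized p ∘ₗ τ.toLinearMap := by
  induction p using Polynomial.induction_on' with
  | add p q hp hq => rw [add_mul, map_add, map_add, hp, hq, LinearMap.add_comp]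
  | monomial n a =>
    ext x
    simp [linearized_monomial, pow_succ, AlgHom.mul_apply]

theorem linearized_mul_X_sub_one (p : K[X]) :
    τ.linearized (p * (X - 1)) = τ.linearized p ∘ₗ (τ.toLinearMap - LinearMap.id) := by
  rw [mul_sub, mul_one, map_sub, linearized_mul_X, LinearMap.comp_sub, LinearMap.comp_id]

noncomputable def twist (p : K[X]) (u : K) : K[X] :=
  p.sum fun i a ↦ monomial i (a * (τ ^ i) u)

theorem coeff_twist (p : K[X]) (u : K) (n : ℕ) :
    (τ.twist p u).coeff n = p.coeff n * (τ ^ n) u := by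
  simp only [twist, Polynomial.sum, finsetSum_coeff, coeff_monomial, Finset.sum_ite_eq']
  split_ifs with hn
  · rfl
  · rw [notMem_support_iff.mp hn, zero_mul]

theorem support_twist (p : K[X]) {u : K} (hu : u ≠ 0) : (τ.twist p u).support = p.support := by
  ext n
  simp only [Polynomial.mem_support_iff, coeff_twist, ne_eq, mul_eq_zero, map_eq_zero, hu,
    or_false]

theorem twist_eq_zero_iff (p : K[X]) {u : K} (hu : u ≠ 0) : τ.twist p u = 0 ↔ p = 0 := by
  rw [← Polynomial.support_eq_empty, support_twist τ p hu, Polynomial.support_eq_empty]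

theorem natDegree_twist (p : K[X]) {u : K} (hu : u ≠ 0) :
    (τ.twist p u).natDegree = p.natDegree := by
  simp only [natDegree, degree, support_twist τ p hu]

theorem linearized_twist (p : K[X]) (u : K) :
    τ.linearized (τ.twist p u) = τ.linearized p ∘ₗ mulLeft F u := by
  ext x
  simp [twist, linearized_apply, Polynomial.sum, map_sum, linearized_monomial, mul_assoc]

theorem finrank_ker_sub_id_le_one (hfix : ∀ x, τ x = x → x ∈ Set.range (algebraMap F K)) :
    finrank F (ker (τ.toLinearMap - LinearMap.id)) ≤ 1 := by
  have hle : ker (τ.toLinearMap - LinearMap.id) ≤ Submodule.span F {1} := by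
    intro x hx
    obtain ⟨a, rfl⟩ := hfix x (sub_eq_zero.mp hx)
    exact Submodule.mem_span_singleton.mpr ⟨a, (Algebra.algebraMap_eq_smul_one a).symm⟩
  calc finrank F (ker (τ.toLinearMap - LinearMap.id))
      ≤ finrank F (Submodule.span F {(1 : K)}) := Submodule.finrank_mono hle
    _ ≤ 1 := (finrank_span_le_card ({1} : Set K)).trans (by simp)

theorem finrank_ker_linearized_le [FiniteDimensional F K]
    (hfix : ∀ x, τ x = x → x ∈ Set.range (algebraMap F K)) {p : K[X]} (hp : p ≠ 0) :
    finrank F (ker (τ.linearized p)) ≤ p.natDegree := by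
  by_cases hker : ker (τ.linearized p) = ⊥
  · rw [hker, finrank_bot]
    exact Nat.zero_le _
  obtain ⟨u, hu, hu0⟩ := Submodule.exists_mem_ne_zero_of_ne_bot hker
  have hb : (τ.twist p u).IsRoot 1 := by
    rw [IsRoot.def, ← τ.linearized_apply_one, linearized_twist, LinearMap.comp_apply,
      mulLeft_apply, mul_one]
    exact hu
  obtain ⟨m, hbm⟩ := dvd_iff_isRoot.mpr hb
  have hm0 : m ≠ 0 := by
    rintro hm
    rw [hm, mul_zero, twist_eq_zero_iff τ p hu0] at hbm
    exact hp hbm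
  have hdeg : p.natDegree = m.natDegree + 1 := by
    rw [← natDegree_twist τ p hu0, hbm, natDegree_mul (X_sub_C_ne_zero 1) hm0,
      natDegree_X_sub_C, add_comm]
  have hker_le :
      ker (τ.linearized p) ≤ (ker (τ.linearized (τ.twist p u))).map (mulLeft F u) := by
    intro x hx
    refine ⟨u⁻¹ * x, ?_, by simp [hu0]⟩
    simpa [linearized_twist, hu0] using hx
  calc finrank F (ker (τ.linearized p))
      ≤ finrank F (ker (τ.linearized (τ.twist p u))) :=
        (Submodule.finrank_mono hker_le).trans (Submodule.finrank_map_le _ _)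
    _ ≤ finrank F (ker (τ.linearized m)) + finrank F (ker (τ.toLinearMap - LinearMap.id)) := by
        rw [hbm, mul_comm, C_1, linearized_mul_X_sub_one]
        exact finrank_ker_comp_le _ _
    _ ≤ m.natDegree + 1 :=
        add_le_add (finrank_ker_linearized_le hfix hm0) (τ.finrank_ker_sub_id_le_one hfix)
    _ = p.natDegree := hdeg.symm
termination_by p.natDegree
decreasing_by omega

theorem linearIndependent_pow_apply [FiniteDimensional F K]
    (hfix : ∀ x, τ x = x → x ∈ Set.range (algebraMap F K)) {ι : Type*} (v : ι → K) {r : ℕ}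
    (hr : r ≤ finrank F (Submodule.span F (Set.range v))) :
    LinearIndependent K (fun i : Fin r ↦ fun j ↦ (τ ^ (i : ℕ)) (v j)) := by
  rw [Fintype.linearIndependent_iff]
  intro g hg
  by_contra! ⟨i, hi⟩
  set p : K[X] := ∑ i : Fin r, C (g i) * X ^ (i : ℕ)
  have hp : p ≠ 0 := by
    refine ne_of_apply_ne (coeff · i) ?_
    simpa [p, coeff_C_mul_X_pow, Fin.val_inj] using hi
  have hdeg : p.natDegree < r := (natDegree_lt_iff_degree_lt hp).mpr (degree_sum_fin_lt g)
  have hspan : Submodule.span F (Set.range v) ≤ ker (τ.linearized p) := by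
    rw [Submodule.span_le]
    rintro _ ⟨j, rfl⟩
    simpa [p, C_mul_X_pow_eq_monomial, linearized_monomial] using congrFun hg j
  have := (Submodule.finrank_mono hspan).trans (τ.finrank_ker_linearized_le hfix hp)
  omega

end AlgHom

theorem FiniteField.mem_range_algebraMap_of_frobeniusAlgHom_pow_apply_eq {Fq K : Type*}
    [Field Fq] [Fintype Fq] [Field K] [Finite K] [Algebra Fq K] {s : ℕ}
    (hs : s.Coprime (finrank Fq K)) {x : K} (hx : (frobeniusAlgHom Fq K ^ s) x = x) : x ∈ Set.range (algebraMap Fq K) := by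
  rw [← orderOf_frobeniusAlgHom] at hs
  obtain ⟨a, ha⟩ := exists_pow_eq_self_of_coprime hs
  have hφ : frobeniusAlgHom Fq K x = x := by
    rw [← ha, AlgHom.coe_pow]
    exact Function.iterate_fixed hx a
  rw [IsGalois.mem_range_algebraMap_iff_fixed]
  intro f
  obtain ⟨n, rfl⟩ := (bijective_frobeniusAlgEquivOfAlgebraic_pow Fq K).2 f
  rw [AlgEquiv.coe_pow]
  exact Function.iterate_fixed hφ n

theorem stmt5_general {q m s n r : ℕ} (Fq K : Type) [Field Fq] [Fintype Fq] [Field K] [Fintype K]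
    [Algebra Fq K] (hq : Fintype.card Fq = q) (hK : Fintype.card K = q ^ m)
    (hgcd : Nat.gcd s m = 1)
    (v : Fin n → K) (hv : rankQ Fq v = r) :
    LinearIndependent K (fun i : Fin r => fun j : Fin n => (v j) ^ q ^ (s * (i : ℕ))) := by
  have hm : finrank Fq K = m := by
    have hcard := Module.card_eq_pow_finrank (K := Fq) (V := K)
    rw [hK, hq] at hcard
    exact (Nat.pow_right_injective (hq ▸ Fintype.one_lt_card) hcard).symm
  have hpow (i : ℕ) (x : K) :
      ((FiniteField.frobeniusAlgHom Fq K ^ s) ^ i) x = x ^ q ^ (s * i) := by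
    rw [← pow_mul, AlgHom.coe_pow, FiniteField.coe_frobeniusAlgHom, pow_iterate, hq]
  simp_rw [← hpow]
  exact (FiniteField.frobeniusAlgHom Fq K ^ s).linearIndependent_pow_apply
    (fun _ ↦ FiniteField.mem_range_algebraMap_of_frobeniusAlgHom_pow_apply_eq (hm ▸ hgcd))
    v hv.ge

/-- if `v` has rank `r` over `F_q` and `gcd(s, m) = 1`, then
`v, v^[s], …, v^[s(r-1)]` are linearly independent over `F_{q^m}`. -/
theorem stmt5 {q m s n r : ℕ} (Fq K : Type) [Field Fq] [Fintype Fq] [Field K] [Fintype K]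
    [Algebra Fq K] (hq : Fintype.card Fq = q) (hK : Fintype.card K = q ^ m)
    (hs : 0 < s) (hgcd : Nat.gcd s m = 1)
    (v : Fin n → K) (hv : rankQ Fq v = r) :
    LinearIndependent K (fun i : Fin r => fun j : Fin n => (v j) ^ q ^ (s * (i : ℕ))) :=
  stmt5_general Fq K hq hK hgcd v hv
end

section
/- Let s be a positive integer with gcd(s, m) = 1, let 1 ≤ k < n, let g_1, …, g_n ∈ F_{q^m}, and suppose the k Moore vectors (g_1^{[si]}, …, g_n^{[si]}), i = 0, …, k − 1, form a basis over F_{q^m} of a linear code C ⊆ F_{q^m}^n that is MRD of dimension k. Then g_1, …, g_n are linearly independent over F_q. -/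
open Matrix

/-!
If `∑ λⱼ gⱼ = 0` for a nonzero `λ ∈ F_q^n`, the `F_q`-linearity of the Frobenius gives
`∑ λⱼ gⱼ^[si] = 0` for every Moore row, so `λ` is orthogonal to the whole code `C`. A nonzero
codeword `c` vanishing on `k - 1` coordinates, chosen to avoid some `j₀` with `λ_{j₀} ≠ 0`, then
has `c_{j₀}` in the `F_q`-span of its remaining `n - k` coordinates, so `rank_q c ≤ n - k`,
contradicting the minimum distance `n - k + 1`.
-/

open Finset Submodule Module

section Frobenius

variable {Fq K ι : Type*} [Field Fq] [Fintype Fq] [CommRing K] [Algebra Fq K]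

theorem sum_smul_pow_card_pow (s : Finset ι) (lam : ι → Fq) (v : ι → K) (t : ℕ) :
    ∑ j ∈ s, lam j • v j ^ Fintype.card Fq ^ t =
      (∑ j ∈ s, lam j • v j) ^ Fintype.card Fq ^ t := by
  induction t with
  | zero => simp
  | succ t ih =>
    simp only [pow_succ, pow_mul, ← ih]
    have := map_sum (FiniteField.frobeniusAlgHom Fq K)
      (fun j => lam j • v j ^ Fintype.card Fq ^ t) s
    simpa only [map_smul, FiniteField.coe_frobeniusAlgHom] using this.symm

theorem sum_smul_eq_zero_of_mem_span_pow [Fintype ι] {κ : Type*} (e : κ → ℕ) {lam : ι → Fq}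
    {g : ι → K} (hg : ∑ j, lam j • g j = 0) {c : ι → K}
    (hc : c ∈ span K (Set.range fun i j => g j ^ Fintype.card Fq ^ e i)) :
    ∑ j, lam j • c j = 0 := by
  let L : (ι → K) →ₗ[K] K := ∑ j, lam j • LinearMap.proj j
  have hL (v : ι → K) : L v = ∑ j, lam j • v j := by simp [L]
  suffices span K _ ≤ LinearMap.ker L by simpa [hL] using this hc
  rw [span_le]
  rintro _ ⟨i, rfl⟩
  simp [hL, sum_smul_pow_card_pow, hg, Fintype.card_ne_zero]

end Frobenius

theorem mem_span_image_of_sum_smul_eq_zero {R M ι : Type*} [Field R] [AddCommGroup M]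
    [Module R M] [Fintype ι] [DecidableEq ι] {lam : ι → R} {v : ι → M} (hsum : ∑ j, lam j • v j = 0)
    {j₀ : ι} (hj₀ : lam j₀ ≠ 0) {A : Set ι} (hA : ∀ j ≠ j₀, j ∉ A → v j = 0) :
    v j₀ ∈ span R (v '' A) := by
  have hrest : ∑ j ∈ univ.erase j₀, lam j • v j ∈ span R (v '' A) := by
    refine sum_mem fun j hj => smul_mem _ _ ?_
    by_cases hjA : j ∈ A
    · exact subset_span ⟨j, hjA, rfl⟩
    · rw [hA j (ne_of_mem_erase hj) hjA]
      exact zero_mem _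
  have hsmul : lam j₀ • v j₀ = -∑ j ∈ univ.erase j₀, lam j • v j := by
    rw [eq_neg_iff_add_eq_zero, add_sum_erase univ (fun j => lam j • v j) (mem_univ j₀), hsum]
  rw [← inv_smul_smul₀ hj₀ (v j₀), hsmul]
  exact smul_mem _ _ (neg_mem hrest)

theorem exists_mem_ne_zero_vanishing_of_card_lt_finrank {K ι : Type*} [Field K] [Fintype ι]
    (C : Submodule K (ι → K)) (T : Finset ι) (hT : #T < finrank K C) :
    ∃ c ∈ C, c ≠ 0 ∧ ∀ j ∈ T, c j = 0 := by
  let restrict : C →ₗ[K] (T → K) :=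
    (LinearMap.pi fun j : T => LinearMap.proj (j : ι)) ∘ₗ C.subtype
  obtain ⟨x, hx, hx0⟩ := exists_mem_ne_zero_of_ne_bot <|
    LinearMap.ker_ne_bot_of_finrank_lt (f := restrict) (by simpa using hT)
  refine ⟨x, x.2, by simpa using hx0, fun j hj => ?_⟩
  simpa [restrict] using congrFun (LinearMap.mem_ker.mp hx) ⟨j, hj⟩

section RankMetric

variable {Fq K : Type} [Field Fq] [Field K] [Algebra Fq K] {n : ℕ}

theorem rankQ_le_card_of_forall_mem_span {v : Fin n → K} (A : Finset (Fin n))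
    (h : ∀ j, v j ∈ span Fq (v '' A)) : rankQ Fq v ≤ #A := by
  classical
  have hle : Set.range v ⊆ span Fq ((A.image v : Finset K) : Set K) := by
    rw [coe_image]
    exact Set.range_subset_iff.mpr h
  calc rankQ Fq v ≤ finrank Fq (span Fq ((A.image v : Finset K) : Set K)) :=
        Submodule.finrank_mono (span_le.mpr hle)
    _ ≤ #(A.image v) := finrank_span_finset_le_card _
    _ ≤ #A := card_image_le

theorem minRankDist_le_rankQ {C : Submodule K (Fin n → K)} {c : Fin n → K} (hc : c ∈ C)
    (hc0 : c ≠ 0) : minRankDist Fq C ≤ rankQ Fq c :=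
  Nat.sInf_le ⟨c, ⟨hc, hc0⟩, rfl⟩

theorem not_isMRD_of_forall_sum_smul_eq_zero {C : Submodule K (Fin n → K)} {k : ℕ}
    (hk : 1 ≤ k) (hkn : k ≤ n) {lam : Fin n → Fq} (hlam : lam ≠ 0)
    (hC : ∀ c ∈ C, ∑ j, lam j • c j = 0) : ¬IsMRD Fq C k := by
  classical
  rintro ⟨hdim, hdist⟩
  obtain ⟨j₀, hj₀⟩ := Function.ne_iff.mp hlam
  obtain ⟨T, hTsub, hTcard⟩ := exists_subset_card_eq (s := ({j₀}ᶜ : Finset (Fin n)))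
    (n := k - 1) (by simp [card_compl]; omega)
  have hj₀T : j₀ ∉ T := fun h => by simpa using hTsub h
  obtain ⟨c, hcC, hc0, hcT⟩ := exists_mem_ne_zero_vanishing_of_card_lt_finrank C T (by omega)
  set A := (insert j₀ T)ᶜ
  have hcA : ∀ j ≠ j₀, j ∉ (A : Set (Fin n)) → c j = 0 := fun j hj hjA =>
    hcT j (by simpa [A, hj] using hjA)
  have hspan : ∀ j, c j ∈ span Fq (c '' A) := by
    intro j
    by_cases hj : j = j₀
    · exact hj ▸ mem_span_image_of_sum_smul_eq_zero (hC c hcC) hj₀ hcA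
    by_cases hjA : j ∈ (A : Set (Fin n))
    · exact subset_span ⟨j, hjA, rfl⟩
    · simp [hcA j hj hjA]
  have hrank := rankQ_le_card_of_forall_mem_span A hspan
  have hA : #A = n - k := by
    rw [card_compl, card_insert_of_notMem hj₀T, hTcard, Fintype.card_fin]
    omega
  have := minRankDist_le_rankQ (Fq := Fq) hcC hc0
  omega

end RankMetric

theorem stmt9_general {q s n k : ℕ} (Fq K : Type) [Field Fq] [Fintype Fq] [Field K]
    [Algebra Fq K] (hq : Fintype.card Fq = q)
    (hk : 1 ≤ k) (hkn : k < n)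
    (g : Fin n → K) (C : Submodule K (Fin n → K))
    (hspan : Submodule.span K
      (Set.range fun i : Fin k => fun j : Fin n => (g j) ^ q ^ (s * (i : ℕ))) = C)
    (hMRD : IsMRD Fq C k) :
    LinearIndependent Fq g := by
  subst hq
  by_contra hdep
  obtain ⟨lam, hsum, j₀, hj₀⟩ := Fintype.not_linearIndependent_iff.mp hdep
  refine not_isMRD_of_forall_sum_smul_eq_zero hk hkn.le (Function.ne_iff.mpr ⟨j₀, hj₀⟩)
    (fun c hc => ?_) hMRD
  exact sum_smul_eq_zero_of_mem_span_pow (fun i : Fin k => s * i) hsum (hspan ▸ hc)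

/-- if the `k` Moore vectors of `g_1, …, g_n` form a basis of an MRD code
of dimension `k < n`, then `g_1, …, g_n` are linearly independent over `F_q`. -/
theorem stmt9 {q m s n k : ℕ} (Fq K : Type) [Field Fq] [Fintype Fq] [Field K] [Fintype K]
    [Algebra Fq K] (hq : Fintype.card Fq = q) (hK : Fintype.card K = q ^ m)
    (hs : 0 < s) (hgcd : Nat.gcd s m = 1) (hk : 1 ≤ k) (hkn : k < n)
    (g : Fin n → K) (C : Submodule K (Fin n → K))
    (hindep : LinearIndependent K
      (fun i : Fin k => fun j : Fin n => (g j) ^ q ^ (s * (i : ℕ))))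
    (hspan : Submodule.span K
      (Set.range fun i : Fin k => fun j : Fin n => (g j) ^ q ^ (s * (i : ℕ))) = C)
    (hMRD : IsMRD Fq C k) :
    LinearIndependent Fq g :=
  stmt9_general Fq K hq hk hkn g C hspan hMRD
end

section
/- Let n ∈ {1, 2, 3} and let C ⊆ F_{q^m}^n be a linear MRD code of dimension k over F_{q^m} with 1 ≤ k ≤ n − 1. Then C is a Gabidulin code: there exist g_1, …, g_n ∈ F_{q^m} linearly independent over F_q such that C is the F_{q^m}-span of the k Moore vectors (g_1^{q^i}, …, g_n^{q^i}) for i = 0, …, k − 1. -/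
open Matrix

open Module Submodule



/-- The `q`-power map is a ring hom on `K` (where `q = |Fq|`). -/
lemma exists_qpow_ringHom (Fq : Type) {K : Type} [Field Fq] [Fintype Fq] [Field K] [Algebra Fq K] : ∃ φ : K →+* K, ∀ x, φ x = x ^ Fintype.card Fq := by
  obtain ⟨p, hchar⟩ := CharP.exists Fq
  haveI := hchar
  obtain ⟨s, hp, hcard⟩ := FiniteField.card Fq p
  haveI : CharP K p := charP_of_injective_algebraMap (algebraMap Fq K).injective p
  haveI : Fact p.Prime := ⟨hp⟩
  haveI : ExpChar K p := .prime hp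
  exact ⟨iterateFrobenius K p s, fun x => by rw [iterateFrobenius_def, hcard]⟩

/-- Fixed points of `x ↦ x ^ |Fq|` in `K` lie in the image of `Fq`. -/
lemma exists_algebraMap_eq_of_pow_card (Fq : Type) {K : Type} [Field Fq] [Fintype Fq] [Field K] [Fintype K] [Algebra Fq K] {x : K} (hx : x ^ Fintype.card Fq = x) :
    ∃ a : Fq, algebraMap Fq K a = x := by
  classical
  set q := Fintype.card Fq with hq
  have hq1 : 1 < q := Fintype.one_lt_card
  set P : Polynomial K := Polynomial.X ^ q - Polynomial.X with hP
  have hP0 : P ≠ 0 := FiniteField.X_pow_card_sub_X_ne_zero K hq1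
  have hdeg : P.natDegree = q := FiniteField.X_pow_card_sub_X_natDegree_eq K hq1
  have hroot : ∀ y : K, y ^ q = y → y ∈ P.roots.toFinset := by
    intro y hy
    rw [Multiset.mem_toFinset, Polynomial.mem_roots hP0]
    simp [hP, Polynomial.IsRoot, sub_eq_zero, hy]
  set S : Finset K := Finset.univ.image (fun a : Fq => algebraMap Fq K a) with hS
  have hSsub : S ⊆ P.roots.toFinset := by
    intro y hy
    rw [hS, Finset.mem_image] at hy
    obtain ⟨a, -, rfl⟩ := hy
    exact hroot _ (by rw [← map_pow, FiniteField.pow_card])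
  have hScard : S.card = q := by
    rw [hS, Finset.card_image_of_injective _ (algebraMap Fq K).injective, Finset.card_univ]
  have hcard_le : P.roots.toFinset.card ≤ q := by
    calc P.roots.toFinset.card ≤ Multiset.card P.roots := Multiset.toFinset_card_le _
    _ ≤ P.natDegree := Polynomial.card_roots' P
    _ = q := hdeg
  have hSeq : S = P.roots.toFinset :=
    Finset.eq_of_subset_of_card_le hSsub (by rw [hScard]; exact hcard_le)
  have hxS : x ∈ S := by rw [hSeq]; exact hroot x hx
  rw [hS, Finset.mem_image] at hxS
  obtain ⟨a, -, ha⟩ := hxS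
  exact ⟨a, ha⟩

/-- If all entries of `v` lie in a 1-dimensional `Fq`-space, the span of its range
has `Fq`-dimension at most 1. -/
lemma finrank_span_range_le_one (Fq : Type) {K : Type} [Field Fq] [Field K] [Algebra Fq K] {n : ℕ} (v : Fin n → K) (w : K)
    (hv : ∀ j, v j ∈ Submodule.span Fq {w}) :
    Module.finrank Fq (Submodule.span Fq (Set.range v)) ≤ 1 := by
  have hle : Submodule.span Fq (Set.range v) ≤ Submodule.span Fq {w} :=
    Submodule.span_le.2 (by rintro _ ⟨j, rfl⟩; exact hv j)
  have h1 : Module.finrank Fq (Submodule.span Fq ({w} : Set K)) ≤ 1 := by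
    by_cases hw : w = 0
    · subst hw
      rw [Submodule.span_zero_singleton]
      simp
    · rw [finrank_span_singleton hw]
  exact le_trans (Submodule.finrank_mono hle) h1



lemma case_k_one {q n : ℕ} (Fq K : Type) [Field Fq] [Fintype Fq] [Field K] [Fintype K]
    [Algebra Fq K] (hq : Fintype.card Fq = q)
    (C : Submodule K (Fin n → K)) (h1 : Module.finrank K C = 1)
    (hdist : ∀ c ∈ C, c ≠ 0 → n ≤ rankQ Fq c) :
    ∃ g : Fin n → K, LinearIndependent Fq g ∧
      C = Submodule.span K (Set.range fun i : Fin 1 => fun j : Fin n => (g j) ^ q ^ (i : ℕ)) := by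
  classical
  have b := Module.finBasisOfFinrankEq K C h1
  set g : Fin n → K := (b 0 : Fin n → K) with hg
  have hgC : g ∈ C := (b 0).2
  have hg0 : g ≠ 0 := by
    intro h0
    exact b.ne_zero 0 (Subtype.ext h0)
  -- rankQ g = n
  have hub : rankQ Fq g ≤ n := by
    have : Submodule.span Fq (Set.range g) ≤ Submodule.span Fq ((Finset.univ.image g : Finset K) : Set K) := by
      apply Submodule.span_le.2
      rintro _ ⟨j, rfl⟩
      apply Submodule.subset_span
      simp
    calc rankQ Fq g ≤ Module.finrank Fq (Submodule.span Fq ((Finset.univ.image g : Finset K) : Set K)) :=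
          Submodule.finrank_mono this
      _ ≤ (Finset.univ.image g).card := finrank_span_finset_le_card _
      _ ≤ (Finset.univ : Finset (Fin n)).card := Finset.card_image_le
      _ = n := by simp
  have hrank : rankQ Fq g = n := le_antisymm hub (hdist g hgC hg0)
  have hLI : LinearIndependent Fq g := by
    rw [linearIndependent_iff_card_eq_finrank_span]
    rw [Fintype.card_fin]
    exact hrank.symm
  refine ⟨g, hLI, ?_⟩
  have hfun : (fun i : Fin 1 => fun j : Fin n => (g j) ^ q ^ (i : ℕ)) = fun i : Fin 1 => C.subtype (b i) := by
    funext i j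
    rw [Subsingleton.elim i 0]
    rw [show ((0 : Fin 1) : ℕ) = 0 from rfl, pow_zero, pow_one]
    rfl
  rw [hfun]
  show C = Submodule.span K (Set.range (C.subtype ∘ b))
  rw [Set.range_comp, ← Submodule.map_span, b.span_eq, Submodule.map_top, Submodule.range_subtype]

lemma case_k_two {q : ℕ} (Fq K : Type) [Field Fq] [Fintype Fq] [Field K] [Fintype K]
    [Algebra Fq K] (hq : Fintype.card Fq = q)
    (C : Submodule K (Fin 3 → K)) (h2 : Module.finrank K C = 2)
    (hdist : ∀ c ∈ C, c ≠ 0 → 2 ≤ rankQ Fq c) :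
    ∃ g : Fin 3 → K, LinearIndependent Fq g ∧
      C = Submodule.span K (Set.range fun i : Fin 2 => fun j : Fin 3 => (g j) ^ q ^ (i : ℕ)) := by
  classical
  have hq1 : 1 < q := hq ▸ Fintype.one_lt_card
  have hq0 : q ≠ 0 := by omega
  obtain ⟨φ, hφ⟩ := exists_qpow_ringHom Fq (K := K)
  rw [hq] at hφ
  have hφinj : Function.Injective φ := φ.injective
  have hφbij : Function.Bijective φ := Finite.injective_iff_bijective.1 hφinj
  set e : K ≃ K := Equiv.ofBijective φ hφbij with he
  have hamb : Module.finrank K (Fin 3 → K) = 3 := by simp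
  -- the dot-product functional
  set dotL : (Fin 3 → K) → ((Fin 3 → K) →ₗ[K] K) := fun y =>
    { toFun := fun x => ∑ j, x j * y j
      map_add' := by intro a b; simp [add_mul, Finset.sum_add_distrib]
      map_smul' := by intro c a; simp [Finset.mul_sum, mul_assoc] } with hdotL
  have hdot_apply : ∀ y x : Fin 3 → K, dotL y x = ∑ j, x j * y j := fun y x => rfl
  set δ : Fin 3 → (Fin 3 → K) := fun i => fun j => if i = j then 1 else 0 with hδ
  have hdot_delta : ∀ (y : Fin 3 → K) (i : Fin 3), dotL y (δ i) = y i := by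
    intro y i
    rw [hdot_apply]
    simp [hδ, ite_mul]
  -- construct the parity-check functional f with kernel C
  have hQ : Module.finrank K ((Fin 3 → K) ⧸ C) = 1 := by
    have h := Submodule.finrank_quotient_add_finrank C
    rw [h2, hamb] at h; omega
  have bq := Module.finBasisOfFinrankEq K ((Fin 3 → K) ⧸ C) hQ
  set f : (Fin 3 → K) →ₗ[K] K :=
    (LinearMap.proj 0) ∘ₗ (bq.equivFun : ((Fin 3 → K) ⧸ C) →ₗ[K] (Fin 1 → K)) ∘ₗ C.mkQ with hf
  have hker : LinearMap.ker f = C := by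
    ext x
    constructor
    · intro hx
      have hx' : bq.equivFun (C.mkQ x) 0 = 0 := hx
      have hzero : bq.equivFun (C.mkQ x) = 0 := funext fun i => by rw [Subsingleton.elim i 0]; exact hx'
      have := (LinearEquiv.map_eq_zero_iff _).1 hzero
      rwa [Submodule.mkQ_apply, Submodule.Quotient.mk_eq_zero] at this
    · intro hx
      have : C.mkQ x = 0 := by rwa [Submodule.mkQ_apply, Submodule.Quotient.mk_eq_zero]
      show bq.equivFun (C.mkQ x) 0 = 0
      rw [this, map_zero]
      rfl
  set h : Fin 3 → K := fun j => f (δ j) with hh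
  have hfx : ∀ x, f x = dotL h x := by
    intro x
    rw [hdot_apply]
    conv_lhs => rw [pi_eq_sum_univ x, map_sum]
    apply Finset.sum_congr rfl
    intro j _
    rw [_root_.map_smul]
    simp [hh, hδ, smul_eq_mul]
  have hCker : C = LinearMap.ker (dotL h) := by
    rw [← hker]
    ext x
    simp only [LinearMap.mem_ker, hfx]
  -- h is Fq-linearly independent
  have hLIh : LinearIndependent Fq h := by
    by_contra hcon
    obtain ⟨lam, hsum, i, hi⟩ := Fintype.not_linearIndependent_iff.1 hcon
    set x : Fin 3 → K := fun j => algebraMap Fq K (lam j) with hxdef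
    have hxC : x ∈ C := by
      rw [hCker, LinearMap.mem_ker, hdot_apply]
      simpa [hxdef, Algebra.smul_def] using hsum
    have hx0 : x ≠ 0 := by
      intro h0
      exact hi ((algebraMap Fq K).injective (by simpa [hxdef] using congrFun h0 i))
    have hub : rankQ Fq x ≤ 1 := by
      apply finrank_span_range_le_one Fq x 1
      intro j
      exact Submodule.mem_span_singleton.2 ⟨lam j, by simp [hxdef, Algebra.smul_def]⟩
    have := hdist x hxC hx0
    omega
  -- pull back h along Frobenius
  set h' : Fin 3 → K := fun j => e.symm (h j) with hh'
  have hh'pow : ∀ j, (h' j) ^ q = h j := by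
    intro j
    have := e.apply_symm_apply (h j)
    rwa [he, Equiv.ofBijective_apply, hφ] at this
  -- find nonzero g orthogonal to h and h'
  set ψ : (Fin 3 → K) →ₗ[K] K × K := LinearMap.prod (dotL h) (dotL h') with hψ
  have hkerψ : LinearMap.ker ψ ≠ ⊥ := by
    intro hbot
    have h1 := LinearMap.finrank_range_add_finrank_ker ψ
    rw [hbot, finrank_bot, hamb] at h1
    have h2' : Module.finrank K (LinearMap.range ψ) ≤ Module.finrank K (K × K) :=
      Submodule.finrank_le _
    rw [Module.finrank_prod, Module.finrank_self] at h2'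
    omega
  obtain ⟨g, hgker, hg0⟩ := Submodule.exists_mem_ne_zero_of_ne_bot hkerψ
  have hgh : dotL h g = 0 := by
    have := (LinearMap.mem_ker.1 hgker)
    rw [hψ] at this
    exact congrArg Prod.fst this
  have hgh' : dotL h' g = 0 := by
    have := (LinearMap.mem_ker.1 hgker)
    rw [hψ] at this
    exact congrArg Prod.snd this
  have hgC : g ∈ C := by rw [hCker]; exact hgh
  -- the Frobenius image of g
  set gq : Fin 3 → K := fun j => g j ^ q with hgq
  have hgqC : gq ∈ C := by
    rw [hCker, LinearMap.mem_ker, hdot_apply]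
    have : ∀ j, gq j * h j = φ (g j * h' j) := by
      intro j
      rw [_root_.map_mul, hφ, hφ, hh'pow j, hgq]
    calc (∑ j, gq j * h j) = ∑ j, φ (g j * h' j) := Finset.sum_congr rfl fun j _ => this j
      _ = φ (∑ j, g j * h' j) := (map_sum φ _ _).symm
      _ = φ (dotL h' g) := by rw [hdot_apply]
      _ = 0 := by rw [hgh', map_zero]
  -- key: g cannot be a Frobenius eigenvector
  have keylem : ∀ c : K, (∀ j, g j ^ q = c * g j) → False := by
    intro c hc
    obtain ⟨j0, hj0⟩ : ∃ j0, g j0 ≠ 0 := by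
      by_contra hall
      push_neg at hall
      exact hg0 (funext hall)
    have hc0 : c ≠ 0 := by
      intro h0
      apply hj0
      have := hc j0
      rw [h0, zero_mul] at this
      exact pow_eq_zero_iff hq0 |>.1 this
    have hmem : ∀ j, g j ∈ Submodule.span Fq {g j0} := by
      intro j
      by_cases hgj : g j = 0
      · rw [hgj]; exact Submodule.zero_mem _
      · have ht : (g j / g j0) ^ q = g j / g j0 := by
          rw [div_pow, hc j, hc j0, mul_div_mul_left _ _ hc0]
        obtain ⟨a, ha⟩ := exists_algebraMap_eq_of_pow_card Fq (by rw [hq]; exact ht)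
        refine Submodule.mem_span_singleton.2 ⟨a, ?_⟩
        rw [Algebra.smul_def, ha, div_mul_cancel₀ _ hj0]
    have hub : rankQ Fq g ≤ 1 := finrank_span_range_le_one Fq g (g j0) hmem
    have := hdist g hgC hg0
    omega
  -- g and gq are K-linearly independent
  have hgq0 : gq ≠ 0 := by
    intro h0
    apply hg0
    funext j
    have := congrFun h0 j
    rw [hgq] at this
    exact pow_eq_zero_iff hq0 |>.1 this
  have hpair : LinearIndependent K ![g, gq] := by
    rw [linearIndependent_fin2]
    refine ⟨by simpa using hgq0, ?_⟩
    intro a ha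
    simp only [Matrix.cons_val_one, Matrix.head_cons, Matrix.cons_val_zero] at ha
    have ha0 : a ≠ 0 := by
      intro h0
      rw [h0, zero_smul] at ha
      exact hg0 ha.symm
    apply keylem a⁻¹
    intro j
    have := congrFun ha j
    simp only [Pi.smul_apply, smul_eq_mul, hgq] at this
    field_simp
    linear_combination this
  -- span of g, gq equals C
  have hle : Submodule.span K (Set.range ![g, gq]) ≤ C := by
    rw [Submodule.span_le]
    rintro _ ⟨i, rfl⟩
    fin_cases i
    · simpa using hgC
    · simpa using hgqC
  have hsr : Module.finrank K (Submodule.span K (Set.range ![g, gq])) = 2 := by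
    rw [finrank_span_eq_card hpair, Fintype.card_fin]
  have hCeq : C = Submodule.span K (Set.range ![g, gq]) :=
    (Submodule.eq_of_le_of_finrank_le hle (by rw [h2, hsr])).symm
  -- g is Fq-linearly independent
  have hLIg : LinearIndependent Fq g := by
    by_contra hcon
    obtain ⟨lam, hsum, i, hi⟩ := Fintype.not_linearIndependent_iff.1 hcon
    set mu : Fin 3 → K := fun j => algebraMap Fq K (lam j) with hmu
    have hmui : mu i ≠ 0 := fun h0 => hi ((algebraMap Fq K).injective (by simpa [hmu] using h0))
    have hd1 : dotL mu g = 0 := by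
      rw [hdot_apply]
      calc (∑ j, g j * mu j) = ∑ j, lam j • g j := by
            apply Finset.sum_congr rfl
            intro j _
            rw [Algebra.smul_def, mul_comm]
        _ = 0 := hsum
    have hd2 : dotL mu gq = 0 := by
      rw [hdot_apply]
      have hmupow : ∀ j, mu j ^ q = mu j := by
        intro j
        rw [hmu, ← map_pow]
        congr 1
        rw [← hq]
        exact FiniteField.pow_card _
      calc (∑ j, gq j * mu j) = ∑ j, φ (g j * mu j) := by
            apply Finset.sum_congr rfl
            intro j _
            rw [_root_.map_mul, hφ, hφ, hmupow j, hgq]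
        _ = φ (∑ j, g j * mu j) := (map_sum φ _ _).symm
        _ = φ (dotL mu g) := by rw [hdot_apply]
        _ = 0 := by rw [hd1, map_zero]
    have hCle : C ≤ LinearMap.ker (dotL mu) := by
      rw [hCeq, Submodule.span_le]
      rintro _ ⟨i', rfl⟩
      fin_cases i'
      · simpa [LinearMap.mem_ker] using hd1
      · simpa [LinearMap.mem_ker] using hd2
    -- pick x₀ ∉ C
    have hCne : C ≠ ⊤ := by
      intro htop
      rw [htop, finrank_top, hamb] at h2
      omega
    obtain ⟨x0, hx0⟩ : ∃ x0, x0 ∉ C := by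
      by_contra hno
      push_neg at hno
      exact hCne (eq_top_iff.2 fun x _ => hno x)
    have hα : dotL h x0 ≠ 0 := by
      intro h0
      apply hx0
      rw [hCker]
      exact h0
    -- proportionality: dotL mu x = (dotL h x / dotL h x0) * dotL mu x0
    have hprop : ∀ x, dotL mu x = (dotL h x / dotL h x0) * dotL mu x0 := by
      intro x
      have hmem : x - (dotL h x / dotL h x0) • x0 ∈ LinearMap.ker (dotL h) := by
        rw [LinearMap.mem_ker, map_sub, _root_.map_smul, smul_eq_mul, div_mul_cancel₀ _ hα, sub_self]
      have hmem2 : x - (dotL h x / dotL h x0) • x0 ∈ LinearMap.ker (dotL mu) :=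
        hCle (hCker ▸ hmem)
      rw [LinearMap.mem_ker, map_sub, _root_.map_smul, smul_eq_mul, sub_eq_zero] at hmem2
      exact hmem2
    have hβ : dotL mu x0 ≠ 0 := by
      intro h0
      apply hmui
      have := hprop (δ i)
      rwa [hdot_delta, h0, mul_zero] at this
    -- h j = (dotL h x0 / dotL mu x0) * mu j, contradicting LI of h
    set c : K := dotL h x0 / dotL mu x0 with hc
    have hhj : ∀ j, h j = lam j • c := by
      intro j
      have hthis := hprop (δ j)
      rw [hdot_delta, hdot_delta] at hthis
      rw [Algebra.smul_def]
      show h j = mu j * c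
      rw [hthis, hc]
      field_simp
    have h3 : (3 : ℕ) = Module.finrank Fq (Submodule.span Fq (Set.range h)) := by
      have := linearIndependent_iff_card_eq_finrank_span.1 hLIh
      rwa [Fintype.card_fin] at this
    have hub : Module.finrank Fq (Submodule.span Fq (Set.range h)) ≤ 1 := by
      apply finrank_span_range_le_one Fq h c
      intro j
      exact Submodule.mem_span_singleton.2 ⟨lam j, (hhj j).symm⟩
    omega
  -- conclude
  refine ⟨g, hLIg, ?_⟩
  have hM : (fun i : Fin 2 => fun j : Fin 3 => (g j) ^ q ^ (i : ℕ)) = ![g, gq] := by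
    funext i j
    fin_cases i
    · show g j ^ q ^ (0 : ℕ) = g j
      rw [pow_zero, pow_one]
    · show g j ^ q ^ (1 : ℕ) = gq j
      rw [pow_one, hgq]
  rw [hM]
  exact hCeq


/-- every linear MRD code of length `n ∈ {1, 2, 3}` (and dimension
`1 ≤ k ≤ n - 1`) is a Gabidulin code. -/
theorem stmt13 {q m n k : ℕ} (Fq K : Type) [Field Fq] [Fintype Fq] [Field K] [Fintype K]
    [Algebra Fq K] (hq : Fintype.card Fq = q) (hK : Fintype.card K = q ^ m)
    (hn : n = 1 ∨ n = 2 ∨ n = 3) (hk : 1 ≤ k) (hkn : k ≤ n - 1)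
    (C : Submodule K (Fin n → K)) (hMRD : IsMRD Fq C k) :
    ∃ g : Fin n → K, LinearIndependent Fq g ∧
      C = Submodule.span K
        (Set.range fun i : Fin k => fun j : Fin n => (g j) ^ q ^ (i : ℕ)) := by
  obtain ⟨hdim, hdist⟩ := hMRD
  have hmem : ∀ c ∈ C, c ≠ 0 → n - k + 1 ≤ rankQ Fq c := by
    intro c hc hc0
    rw [← hdist]
    exact Nat.sInf_le ⟨c, ⟨hc, hc0⟩, rfl⟩
  rcases hn with rfl | rfl | rfl
  · omega
  · have hk1 : k = 1 := by omega
    subst hk1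
    exact case_k_one Fq K hq C hdim (fun c hc hc0 => by simpa using hmem c hc hc0)
  · have hk12 : k = 1 ∨ k = 2 := by omega
    rcases hk12 with rfl | rfl
    · exact case_k_one Fq K hq C hdim (fun c hc hc0 => by simpa using hmem c hc hc0)
    · exact case_k_two Fq K hq C hdim (fun c hc hc0 => by simpa using hmem c hc hc0)
end

section
/- Let q be a prime power and m > 7. Let α be a primitive element of F_{q^m} (a generator of the multiplicative group F_{q^m}^*), and let γ ∈ F_q with γ ≠ 0 be such that, in F_{q^m}, γ ≠ (α^{q^s} + α)·(α^{2q^s} + α^{q^s + 1} + α²) for every integer s with 0 < s < m and gcd(s, m) = 1. Let C ⊆ F_{q^m}^5 be the F_{q^m}-span of the two vectors (1, 0, α, α², α³) and (0, 1, α², α⁴, γα). Then C is an MRD code of dimension 2 (its minimum rank distance is 4), and C is not a generalized Gabidulin code: there exist no integer s with gcd(s, m) = 1 and no g_1, …, g_5 ∈ F_{q^m} linearly independent over F_q such that C equals the F_{q^m}-span of (g_1, …, g_5) and (g_1^{q^s}, …, g_5^{q^s}). -/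
/-!
Write `r₁ = (1, 0, α, α², α³)` and `r₂ = (0, 1, α², α⁴, γα)`. If a codeword `a r₁ + b r₂ ≠ 0`
had rank at most `3`, two `F_q`-independent vectors `u, w` would annihilate it, so `(a, b)` would
lie in the kernel of the `2 × 2` matrix `(rᵢ · u, rᵢ · w)` and its determinant would vanish. That
determinant is a polynomial of degree at most `7` in `α` over `F_q`, and `α` has degree `m ≥ 8`,
so all its coefficients vanish. These coefficients are linear in the `2 × 2` minors of `(u, w)`,
and together with the Plücker relations they force all minors to vanish: `u, w` are dependent.

If `C` were spanned by `g` and `σ g` with `σ = Frob^s`, write `g = a r₁ + b r₂`; the first two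
coordinates give `σ g = σ a r₁ + σ b r₂`, and the third and fifth coordinates then give a linear
system for `(σ a, σ b)` whose determinant is, up to the factor `(σ α - α)²`, the quantity that
`γ` is assumed to avoid. Since `α` generates `K` and `m ∤ s`, `σ α ≠ α`, so `g = 0`.
-/

open Matrix

open Module

section RankQ

variable {F K : Type} [Field F] [Field K] [Algebra F K] {n : ℕ}

theorem rankQ_eq_finrank_range (v : Fin n → K) :
    rankQ F v = finrank F (LinearMap.range (Fintype.linearCombination F v)) := by
  rw [rankQ, Fintype.range_linearCombination]

theorem rankQ_le_of_apply_eq_zero (v : Fin (n + 1) → K) {j : Fin (n + 1)} (hj : v j = 0) :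
    rankQ F v ≤ n := by
  rw [rankQ, ← Fin.insertNth_self_removeNth j v, Fin.range_insertNth, hj,
    show Set.insert (0 : K) _ = insert 0 _ from rfl, Submodule.span_insert_zero]
  exact (finrank_range_le_card _).trans_eq (Fintype.card_fin n)

theorem exists_linearIndependent_pair_of_rankQ_add_two_le (c : Fin n → K)
    (h : rankQ F c + 2 ≤ n) :
    ∃ u w : Fin n → F, LinearIndependent F ![u, w] ∧
      Fintype.linearCombination F c u = 0 ∧ Fintype.linearCombination F c w = 0 := by
  set L := Fintype.linearCombination F c
  have hker : 1 < finrank F (LinearMap.ker L) := by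
    have := L.finrank_range_add_finrank_ker
    rw [finrank_fin_fun, ← rankQ_eq_finrank_range] at this
    omega
  have : Nontrivial (LinearMap.ker L) := nontrivial_of_finrank_pos (R := F) (by omega)
  obtain ⟨x, hx⟩ := exists_ne (0 : LinearMap.ker L)
  obtain ⟨y, hxy⟩ := exists_linearIndependent_pair_of_one_lt_finrank hker hx
  refine ⟨x, y, ?_, x.2, y.2⟩
  have := hxy.map' _ (LinearMap.ker L).ker_subtype
  rwa [show (LinearMap.ker L).subtype ∘ ![x, y] = ![(x : Fin n → F), y] by
    ext i : 1; fin_cases i <;> rfl] at this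

theorem le_rankQ_smul_add_smul (v₁ v₂ : Fin n → K)
    (hdet : ∀ u w : Fin n → F, LinearIndependent F ![u, w] →
      Fintype.linearCombination F v₁ u * Fintype.linearCombination F v₂ w ≠
        Fintype.linearCombination F v₁ w * Fintype.linearCombination F v₂ u)
    {a b : K} (hab : a ≠ 0 ∨ b ≠ 0) : n ≤ rankQ F (a • v₁ + b • v₂) + 1 := by
  by_contra! hlt
  obtain ⟨u, w, huw, hu, hw⟩ :=
    exists_linearIndependent_pair_of_rankQ_add_two_le (F := F) (a • v₁ + b • v₂) (by omega)
  have hlin : ∀ z, Fintype.linearCombination F (a • v₁ + b • v₂) z =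
      a * Fintype.linearCombination F v₁ z + b * Fintype.linearCombination F v₂ z := by
    intro z
    simp [Fintype.linearCombination_apply, Finset.mul_sum, Finset.sum_add_distrib]
  rw [hlin] at hu hw
  set x₁ := Fintype.linearCombination F v₁ u
  set x₂ := Fintype.linearCombination F v₂ u
  set y₁ := Fintype.linearCombination F v₁ w
  set y₂ := Fintype.linearCombination F v₂ w
  apply hdet u w huw
  rw [← sub_eq_zero]
  rcases hab with ha | hb
  · exact (mul_eq_zero.mp (by linear_combination y₂ * hu - x₂ * hw)).resolve_left ha
  · exact (mul_eq_zero.mp (by linear_combination x₁ * hw - y₁ * hu)).resolve_left hb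

end RankQ

theorem not_linearIndependent_pair_of_mul_eq_mul {F ι : Type*} [Field F] {u w : ι → F}
    (h : ∀ i j, u i * w j = u j * w i) : ¬ LinearIndependent F ![u, w] := by
  intro hli
  obtain ⟨j, hj⟩ : ∃ j, u j ≠ 0 := by
    by_contra! h0
    exact hli.ne_zero 0 (funext h0)
  have := LinearIndependent.pair_iff.mp hli (w j) (-u j) (by
    ext i
    simp only [Pi.add_apply, Pi.smul_apply, smul_eq_mul, Pi.zero_apply]
    linear_combination -h j i)
  exact hj (neg_eq_zero.mp this.2)

theorem linearIndependent_pow_of_forall_eq_pow {F K : Type*} [Field F] [Field K] [Algebra F K]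
    [FiniteDimensional F K] {α : K} (hα : ∀ x : K, x ≠ 0 → ∃ i : ℕ, x = α ^ i) {k : ℕ}
    (hk : k ≤ finrank F K) : LinearIndependent F (fun i : Fin k => α ^ (i : ℕ)) := by
  have htop : IntermediateField.adjoin F {α} = ⊤ := by
    refine eq_top_iff.mpr fun x _ => ?_
    obtain rfl | hx := eq_or_ne x 0
    · exact zero_mem _
    · obtain ⟨i, rfl⟩ := hα x hx
      exact pow_mem (IntermediateField.mem_adjoin_simple_self F α) i
  have hdeg : (minpoly F α).natDegree = finrank F K := by
    rw [← IntermediateField.adjoin.finrank (IsIntegral.of_finite F α), htop,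
      IntermediateField.finrank_top']
  exact (hdeg ▸ linearIndependent_pow α).comp (Fin.castLE hk) (Fin.castLE_injective hk)

namespace FiniteField

variable {F K : Type} [Field F] [Fintype F] [Field K] [Algebra F K]

theorem finrank_eq_of_card_eq_pow [Fintype K] {q m : ℕ} (hq : Fintype.card F = q)
    (hK : Fintype.card K = q ^ m) : finrank F K = m := by
  have := Module.card_eq_pow_finrank (K := F) (V := K)
  rw [hq, hK] at this
  exact Nat.pow_right_injective (hq ▸ Fintype.one_lt_card) this.symm

theorem frobeniusAlgHom_pow_apply (n : ℕ) (x : K) :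
    (frobeniusAlgHom F K ^ n) x = x ^ Fintype.card F ^ n := by
  rw [AlgHom.coe_pow, coe_frobeniusAlgHom, pow_iterate]

theorem frobeniusAlgHom_pow_mod_finrank [Finite K] (n : ℕ) :
    frobeniusAlgHom F K ^ (n % finrank F K) = frobeniusAlgHom F K ^ n := by
  rw [← orderOf_frobeniusAlgHom, pow_mod_orderOf]

theorem frobeniusAlgHom_pow_apply_ne_self [Finite K] {α : K}
    (hα : ∀ x : K, x ≠ 0 → ∃ i : ℕ, x = α ^ i) {n : ℕ} (hn : ¬ finrank F K ∣ n) :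
    (frobeniusAlgHom F K ^ n) α ≠ α := by
  intro hfix
  apply hn
  rw [← orderOf_frobeniusAlgHom]
  refine orderOf_dvd_of_pow_eq_one (AlgHom.ext fun x => ?_)
  obtain rfl | hx := eq_or_ne x 0
  · simp
  · obtain ⟨i, rfl⟩ := hα x hx
    rw [map_pow, hfix, AlgHom.one_apply]

end FiniteField

theorem eq_zero_of_frobenius_relations {K : Type*} [Field K] {α β c A B : K} (hβ : β ≠ α)
    (hc : c ≠ (β + α) * (β ^ 2 + β * α + α ^ 2))
    (h₂ : A * β + B * β ^ 2 = A * α + B * α ^ 2)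
    (h₄ : A * β ^ 3 + B * (c * β) = A * α ^ 3 + B * (c * α)) : A = 0 ∧ B = 0 := by
  have hβα : β - α ≠ 0 := sub_ne_zero.mpr hβ
  have hA : A = -B * (β + α) := by
    have : (β - α) * (A + B * (β + α)) = 0 := by linear_combination h₂
    linear_combination (mul_eq_zero.mp this).resolve_left hβα
  have hB : B = 0 := by
    have : (β - α) * (B * (c - (β + α) * (β ^ 2 + β * α + α ^ 2))) = 0 := by
      linear_combination h₄ - (β - α) * (β ^ 2 + β * α + α ^ 2) * hA
    exact (mul_eq_zero.mp ((mul_eq_zero.mp this).resolve_left hβα)).resolve_right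
      (sub_ne_zero.mpr hc)
  exact ⟨by rw [hA, hB]; ring, hB⟩

section GenRows

variable {F K : Type} [Field F] [Field K] [Algebra F K]

def genRow₁ (α : K) : Fin 5 → K := ![1, 0, α, α ^ 2, α ^ 3]

def genRow₂ (γ : F) (α : K) : Fin 5 → K := ![0, 1, α ^ 2, α ^ 4, algebraMap F K γ * α]

def detCoeff (γ : F) (u w : Fin 5 → F) : Fin 8 → F :=
  ![u 0 * w 1 - u 1 * w 0,
    γ * (u 0 * w 4 - u 4 * w 0) + (u 2 * w 1 - u 1 * w 2),
    (u 0 * w 2 - u 2 * w 0) + γ * (u 2 * w 4 - u 4 * w 2) + (u 3 * w 1 - u 1 * w 3),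
    γ * (u 3 * w 4 - u 4 * w 3) + (u 4 * w 1 - u 1 * w 4),
    (u 0 * w 3 - u 3 * w 0) + (u 3 * w 2 - u 2 * w 3),
    (u 2 * w 3 - u 3 * w 2) + (u 4 * w 2 - u 2 * w 4),
    0,
    u 4 * w 3 - u 3 * w 4]

theorem det_genRows_eq_sum (γ : F) (α : K) (u w : Fin 5 → F) :
    Fintype.linearCombination F (genRow₁ α) u * Fintype.linearCombination F (genRow₂ γ α) w -
        Fintype.linearCombination F (genRow₁ α) w * Fintype.linearCombination F (genRow₂ γ α) u =
      ∑ i : Fin 8, detCoeff γ u w i • α ^ (i : ℕ) := by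
  simp only [Fintype.linearCombination_apply, Fin.sum_univ_five, Fin.sum_univ_eight, genRow₁,
    genRow₂, detCoeff, Algebra.smul_def, Fin.isValue, cons_val_zero, cons_val_one, cons_val,
    Fin.coe_ofNat_eq_mod, Nat.zero_mod, Nat.one_mod, Nat.reduceMod, Nat.mod_succ, map_add, map_sub,
    map_mul, map_zero, pow_zero, pow_one, mul_one, mul_zero, zero_mul, add_zero, zero_add]
  ring

theorem mul_eq_mul_of_detCoeff_eq_zero {γ : F} (hγ : γ ≠ 0) {u w : Fin 5 → F}
    (h : detCoeff γ u w = 0) : ∀ i j, u i * w j = u j * w i := by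
  have e0 := congrFun h 0
  have e1 := congrFun h 1
  have e2 := congrFun h 2
  have e3 := congrFun h 3
  have e4 := congrFun h 4
  have e5 := congrFun h 5
  have e7 := congrFun h 7
  simp only [detCoeff, Fin.isValue, cons_val_zero, cons_val_one, cons_val, Pi.zero_apply]
    at e0 e1 e2 e3 e4 e5 e7
  -- `p04`, `p03` and `p02` first come out squared, through the Plücker relations.
  have p34 : u 3 * w 4 = u 4 * w 3 := by linear_combination -e7
  have p14 : u 1 * w 4 = u 4 * w 1 := by linear_combination -e3 + γ * p34
  have p04 : u 0 * w 4 = u 4 * w 0 := by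
    have hsq : γ * ((u 0 * w 4 - u 4 * w 0) * (u 0 * w 4 - u 4 * w 0)) = 0 := by
      linear_combination (u 0 * w 2 - u 2 * w 0) * p14 - (u 2 * w 4 - u 4 * w 2) * e0 +
        (u 0 * w 4 - u 4 * w 0) * e1
    linear_combination mul_self_eq_zero.mp ((mul_eq_zero.mp hsq).resolve_left hγ)
  have p12 : u 1 * w 2 = u 2 * w 1 := by linear_combination -e1 + γ * p04
  have p03 : u 0 * w 3 = u 3 * w 0 := by
    have hsq : (u 0 * w 3 - u 3 * w 0) * (u 0 * w 3 - u 3 * w 0) = 0 := by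
      linear_combination (u 0 * w 2 - u 2 * w 0) * p34 + (u 2 * w 3 - u 3 * w 2) * p04 +
        (u 0 * w 3 - u 3 * w 0) * (e4 + e5)
    linear_combination mul_self_eq_zero.mp hsq
  have p23 : u 2 * w 3 = u 3 * w 2 := by linear_combination -e4 + p03
  have p24 : u 2 * w 4 = u 4 * w 2 := by linear_combination -e5 + p23
  have p02 : u 0 * w 2 = u 2 * w 0 := by
    have hsq : (u 0 * w 2 - u 2 * w 0) * (u 0 * w 2 - u 2 * w 0) = 0 := by
      linear_combination (u 2 * w 3 - u 3 * w 2) * e0 + (u 1 * w 2 - u 2 * w 1) * p03 -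
        γ * (u 0 * w 2 - u 2 * w 0) * p24 + (u 0 * w 2 - u 2 * w 0) * e2
    linear_combination mul_self_eq_zero.mp hsq
  have p13 : u 1 * w 3 = u 3 * w 1 := by linear_combination -e2 + p02 + γ * p24
  have p01 : u 0 * w 1 = u 1 * w 0 := by linear_combination e0
  intro i j
  fin_cases i <;> fin_cases j <;> grind

theorem det_genRows_ne_zero {γ : F} (hγ : γ ≠ 0) {α : K}
    (hα : LinearIndependent F (fun i : Fin 8 => α ^ (i : ℕ))) (u w : Fin 5 → F)
    (huw : LinearIndependent F ![u, w]) :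
    Fintype.linearCombination F (genRow₁ α) u * Fintype.linearCombination F (genRow₂ γ α) w ≠
      Fintype.linearCombination F (genRow₁ α) w * Fintype.linearCombination F (genRow₂ γ α) u := by
  intro hdet
  rw [← sub_eq_zero, det_genRows_eq_sum] at hdet
  exact not_linearIndependent_pair_of_mul_eq_mul
    (mul_eq_mul_of_detCoeff_eq_zero hγ (funext (Fintype.linearIndependent_iff.mp hα _ hdet))) huw

theorem finrank_span_genRows (γ : F) (α : K) :
    finrank K (Submodule.span K {genRow₁ α, genRow₂ γ α}) = 2 := by
  rw [← Matrix.range_cons_cons_empty, finrank_span_eq_card, Fintype.card_fin]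
  refine LinearIndependent.pair_iff.mpr fun s t hst => ⟨?_, ?_⟩
  · simpa [genRow₁, genRow₂] using congrFun hst 0
  · simpa [genRow₁, genRow₂] using congrFun hst 1

theorem minRankDist_span_genRows {γ : F} (hγ : γ ≠ 0) {α : K}
    (hα : LinearIndependent F (fun i : Fin 8 => α ^ (i : ℕ))) :
    minRankDist F (Submodule.span K {genRow₁ α, genRow₂ γ α}) = 4 := by
  have hlower : ∀ c ∈ Submodule.span K {genRow₁ α, genRow₂ γ α}, c ≠ 0 → 4 ≤ rankQ F c := by
    intro c hc hc0
    obtain ⟨a, b, rfl⟩ := Submodule.mem_span_pair.mp hc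
    have hab : a ≠ 0 ∨ b ≠ 0 := by
      by_contra! h
      simp [h] at hc0
    have := le_rankQ_smul_add_smul _ _ (det_genRows_ne_zero hγ hα) hab
    omega
  have hrow : rankQ F (genRow₁ α) ∈
      rankQ F '' {c | c ∈ Submodule.span K {genRow₁ α, genRow₂ γ α} ∧ c ≠ 0} :=
    ⟨_, ⟨Submodule.subset_span (Set.mem_insert _ _),
      fun h => by simpa [genRow₁] using congrFun h 0⟩, rfl⟩
  refine le_antisymm ((Nat.sInf_le hrow).trans (rankQ_le_of_apply_eq_zero _ (j := 1) rfl))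
    (le_csInf ⟨_, hrow⟩ ?_)
  rintro _ ⟨c, ⟨hc, hc0⟩, rfl⟩
  exact hlower c hc hc0

theorem eq_zero_of_mem_span_genRows_of_map_mem (σ : K →ₐ[F] K) {γ : F} {α : K}
    (hσ : σ α ≠ α) (hγ : algebraMap F K γ ≠ (σ α + α) * (σ α ^ 2 + σ α * α + α ^ 2))
    {g : Fin 5 → K} (hg : g ∈ Submodule.span K {genRow₁ α, genRow₂ γ α})
    (hσg : (fun j => σ (g j)) ∈ Submodule.span K {genRow₁ α, genRow₂ γ α}) : g = 0 := by
  obtain ⟨a, b, rfl⟩ := Submodule.mem_span_pair.mp hg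
  obtain ⟨c, d, hcd⟩ := Submodule.mem_span_pair.mp hσg
  have e0 := congrFun hcd 0
  have e1 := congrFun hcd 1
  have e2 := congrFun hcd 2
  have e4 := congrFun hcd 4
  simp only [genRow₁, genRow₂, Fin.isValue, Pi.add_apply, smul_cons, smul_eq_mul, smul_empty,
    cons_val_zero, cons_val_one, cons_val, mul_one, mul_zero, add_zero, zero_add, map_add, map_mul,
    map_pow, AlgHom.commutes] at e0 e1 e2 e4
  subst e0 e1
  obtain ⟨ha, hb⟩ := eq_zero_of_frobenius_relations hσ hγ e2.symm e4.symm
  simp [(map_eq_zero σ).mp ha, (map_eq_zero σ).mp hb]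

end GenRows

/-- for `m > 7`, a primitive `α ∈ F_{q^m}` and `0 ≠ γ ∈ F_q` with
`γ ≠ (α^{q^s} + α)(α^{2q^s} + α^{q^s+1} + α²)` for all `0 < s < m` with `gcd(s,m) = 1`,
the code spanned by `(1, 0, α, α², α³)` and `(0, 1, α², α⁴, γα)` is MRD of dimension 2
but not a generalized Gabidulin code. -/
theorem stmt17 {q m : ℕ} (Fq K : Type) [Field Fq] [Fintype Fq] [Field K] [Fintype K]
    [Algebra Fq K] (hq : Fintype.card Fq = q) (hK : Fintype.card K = q ^ m)
    (hm : 7 < m)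
    (α : K) (hα : ∀ x : K, x ≠ 0 → ∃ i : ℕ, x = α ^ i)
    (γ : Fq) (hγ0 : γ ≠ 0)
    (hγ : ∀ s : ℕ, 0 < s → s < m → Nat.gcd s m = 1 →
      algebraMap Fq K γ ≠
        (α ^ q ^ s + α) * (α ^ (2 * q ^ s) + α ^ (q ^ s + 1) + α ^ 2))
    (C : Submodule K (Fin 5 → K))
    (hC : C = Submodule.span K
      ({![1, 0, α, α ^ 2, α ^ 3],
        ![0, 1, α ^ 2, α ^ 4, algebraMap Fq K γ * α]} : Set (Fin 5 → K))) :
    IsMRD Fq C 2 ∧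
      ¬ ∃ (s : ℕ) (g : Fin 5 → K), Nat.gcd s m = 1 ∧ LinearIndependent Fq g ∧
        C = Submodule.span K
          ({(fun j => g j), (fun j => (g j) ^ q ^ s)} : Set (Fin 5 → K)) := by
  have hfin : finrank Fq K = m := FiniteField.finrank_eq_of_card_eq_pow hq hK
  have hpow : LinearIndependent Fq (fun i : Fin 8 => α ^ (i : ℕ)) :=
    linearIndependent_pow_of_forall_eq_pow hα (by omega)
  replace hC : C = Submodule.span K {genRow₁ α, genRow₂ γ α} := hC
  subst hC
  refine ⟨⟨finrank_span_genRows γ α, minRankDist_span_genRows hγ0 hpow⟩, ?_⟩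
  rintro ⟨s, g, hs, hg, hC⟩
  have hsm : ¬ m ∣ s := fun h => by rw [Nat.gcd_eq_right h] at hs; omega
  have hσα : (FiniteField.frobeniusAlgHom Fq K ^ s) α = α ^ q ^ (s % m) := by
    rw [← FiniteField.frobeniusAlgHom_pow_mod_finrank, hfin,
      FiniteField.frobeniusAlgHom_pow_apply, hq]
  have hγσ := hγ (s % m) (Nat.pos_of_ne_zero (mt Nat.dvd_of_mod_eq_zero hsm))
    (Nat.mod_lt _ (by omega)) (by rwa [← Nat.gcd_rec, Nat.gcd_comm])
  have hgC : g ∈ Submodule.span K {genRow₁ α, genRow₂ γ α} :=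
    hC ▸ Submodule.subset_span (Set.mem_insert _ _)
  have hσgC : (fun j => (FiniteField.frobeniusAlgHom Fq K ^ s) (g j)) ∈
      Submodule.span K {genRow₁ α, genRow₂ γ α} := by
    simp only [FiniteField.frobeniusAlgHom_pow_apply, hq]
    exact hC ▸ Submodule.subset_span (Set.mem_insert_of_mem _ rfl)
  refine hg.ne_zero 0 (congrFun (eq_zero_of_mem_span_genRows_of_map_mem _
    (FiniteField.frobeniusAlgHom_pow_apply_ne_self hα (hfin ▸ hsm)) ?_ hgC hσgC) 0)
  rw [hσα]
  convert hγσ using 2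
  ring
end
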